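/- arXiv:1307.2536 — 4 statements merged into one kernel-verified Lean document; each statement's English description precedes it below -/
import Mathlib

section
/- For all real numbers n > 0, c with 0 < c ≤ n/2, and w with 0 ≤ w ≤ 1, we have 0 ≤ e^{-cw} - (1 - c/n)^{nw} ≤ c/(n·e). -/
/-!
Put `x = c / n` and `y = n w`, so that `x y = c w`. From `e^{-(x + x²)} ≤ 1 - x ≤ e^{-x}` and
monotonicity of `t ↦ t ^ y` we get `e^{-cw(1 + x)} ≤ (1 - x)^y ≤ e^{-cw}`. The lower bound of the
theorem is the right inequality. For the upper bound, convexity of `exp` gives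
`e^{-cw} - e^{-cw(1 + x)} ≤ e^{-cw} · cw · x`, and `t e^{-t} ≤ e^{-1}` bounds this by `x / e`.
-/

namespace Real

lemma exp_neg_add_sq_le_one_sub {x : ℝ} (hx₀ : 0 ≤ x) (hx : x ≤ 1 / 2) :
    exp (-(x + x ^ 2)) ≤ 1 - x := by
  rw [exp_neg, inv_le_iff_one_le_mul₀ (exp_pos _)]
  have := quadratic_le_exp_of_nonneg (by positivity : 0 ≤ x + x ^ 2)
  nlinarith [exp_pos (x + x ^ 2)]

lemma exp_neg_mul_le_one_sub_rpow {x y : ℝ} (hx₀ : 0 ≤ x) (hx : x ≤ 1 / 2) (hy : 0 ≤ y) :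
    exp (-((x + x ^ 2) * y)) ≤ (1 - x) ^ y := by
  rw [← neg_mul, exp_mul]
  exact rpow_le_rpow (exp_pos _).le (exp_neg_add_sq_le_one_sub hx₀ hx) hy

lemma one_sub_rpow_le_exp_neg_mul {x y : ℝ} (hx : x ≤ 1) (hy : 0 ≤ y) :
    (1 - x) ^ y ≤ exp (-(x * y)) := by
  rw [← neg_mul, exp_mul]
  exact rpow_le_rpow (by linarith) (one_sub_le_exp_neg x) hy

lemma exp_sub_exp_le_exp_mul_sub (a b : ℝ) : exp a - exp b ≤ exp a * (a - b) := by
  have h : exp a * (b - a + 1) ≤ exp b := by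
    calc exp a * (b - a + 1) ≤ exp a * exp (b - a) :=
          mul_le_mul_of_nonneg_left (add_one_le_exp _) (exp_pos a).le
      _ = exp b := by rw [← exp_add]; ring_nf
  linarith

end Real

open Real in
theorem stmt_0_general (n c w : ℝ) (hn : 0 < n) (hc : 0 < c) (hcn : c ≤ n / 2)
    (hw0 : 0 ≤ w) :
    0 ≤ Real.exp (-(c * w)) - (1 - c / n) ^ (n * w) ∧
    Real.exp (-(c * w)) - (1 - c / n) ^ (n * w) ≤ c / (n * Real.exp 1) := by
  set x := c / n
  have hx₀ : 0 ≤ x := by positivity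
  have hx : x ≤ 1 / 2 := by rw [div_le_iff₀ hn]; linarith
  have hy : 0 ≤ n * w := by positivity
  have hxn : x * n = c := div_mul_cancel₀ c hn.ne'
  have hxy : x * (n * w) = c * w := by rw [← hxn]; ring
  constructor
  · exact sub_nonneg.mpr (hxy ▸ one_sub_rpow_le_exp_neg_mul (by linarith) hy)
  · calc exp (-(c * w)) - (1 - x) ^ (n * w)
        ≤ exp (-(c * w)) - exp (-((x + x ^ 2) * (n * w))) :=
          sub_le_sub_left (exp_neg_mul_le_one_sub_rpow hx₀ hx hy) _
      _ ≤ exp (-(c * w)) * (c * w * x) := by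
          convert exp_sub_exp_le_exp_mul_sub (-(c * w)) (-((x + x ^ 2) * (n * w))) using 2
          linear_combination (-1 - x) * hxy
      _ = x * (c * w * exp (-(c * w))) := by ring
      _ ≤ x * exp (-1) := mul_le_mul_of_nonneg_left (mul_exp_neg_le_exp_neg_one _) hx₀
      _ = c / (n * exp 1) := by rw [exp_neg, ← hxn]; field_simp

theorem stmt_0 (n c w : ℝ) (hn : 0 < n) (hc : 0 < c) (hcn : c ≤ n / 2)
    (hw0 : 0 ≤ w) (hw1 : w ≤ 1) :
    0 ≤ Real.exp (-(c * w)) - (1 - c / n) ^ (n * w) ∧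
    Real.exp (-(c * w)) - (1 - c / n) ^ (n * w) ≤ c / (n * Real.exp 1) :=
  stmt_0_general n c w hn hc hcn hw0
end

section
/- For every constant c > 0, (1 - e^{(e^{-c} - 1)}) / (1 - e^{-c}) ≥ 1 - 1/e. -/
open Real

lemma exp_sub_one_le_chord {t : ℝ} (ht₀ : 0 ≤ t) (ht₁ : t ≤ 1) :
    exp (t - 1) ≤ (1 - t) * exp (-1) + t := by
  have h := convexOn_exp.2 (Set.mem_univ (-1)) (Set.mem_univ 0) (sub_nonneg.2 ht₁) ht₀
    (sub_add_cancel 1 t)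
  simp only [smul_eq_mul, mul_zero, add_zero, exp_zero, mul_one] at h
  rwa [show (1 - t) * -1 = t - 1 by ring] at h

lemma one_sub_inv_exp_one_le_div {t : ℝ} (ht₀ : 0 ≤ t) (ht₁ : t < 1) :
    1 - 1 / exp 1 ≤ (1 - exp (t - 1)) / (1 - t) := by
  have hchord := exp_sub_one_le_chord ht₀ ht₁.le
  rw [exp_neg, ← one_div] at hchord
  rw [le_div_iff₀ (sub_pos.2 ht₁)]
  linarith

theorem stmt_7 (c : ℝ) (hc : 0 < c) :
    (1 - Real.exp (Real.exp (-c) - 1)) / (1 - Real.exp (-c)) ≥ 1 - 1 / Real.exp 1 :=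
  one_sub_inv_exp_one_le_div (exp_pos _).le (exp_lt_one_iff.2 (neg_lt_zero.2 hc))
end

section
/- Let c > 0, m ≥ 1, and g_1, …, g_m ≥ 0. Define z_r(τ) = g_r - (1/c)·log( (1 + e^{-cτ}(e^{c·S_r} - 1)) / (1 + e^{-cτ}(e^{c·S_{r-1}} - 1)) ), where S_r = Σ_{k=1}^r g_k and S_0 = 0. Then z_r(0) = g_r - (1/c)·log(e^{c·S_r}/e^{c·S_{r-1}}) = 0, and for all τ ∈ ℝ, z_r'(τ) = (1 - e^{-c(g_r - z_r(τ))}) · e^{-c·Σ_{k=1}^{r-1}(g_k - z_k(τ))}. -/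
theorem stmt_17 (c : ℝ) (hc : 0 < c) (m : ℕ) (hm : 1 ≤ m)
    (g : ℕ → ℝ) (hg : ∀ k, 0 ≤ g k) :
    let S : ℕ → ℝ := fun r => ∑ k ∈ Finset.Icc 1 r, g k
    let z : ℕ → ℝ → ℝ := fun r τ =>
      g r - (1 / c) * Real.log ((1 + Real.exp (-c * τ) * (Real.exp (c * S r) - 1)) /
        (1 + Real.exp (-c * τ) * (Real.exp (c * S (r - 1)) - 1)))
    ∀ r, 1 ≤ r → r ≤ m →
      z r 0 = 0 ∧
      ∀ τ : ℝ, HasDerivAt (z r)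
        ((1 - Real.exp (-c * (g r - z r τ))) *
          Real.exp (-c * ∑ k ∈ Finset.Icc 1 (r - 1), (g k - z k τ))) τ := by
  intro S z
  have hS : ∀ r, 0 ≤ S r := fun r => Finset.sum_nonneg fun k _ => hg k
  set A : ℕ → ℝ → ℝ := fun r τ => 1 + Real.exp (-c * τ) * (Real.exp (c * S r) - 1)
    with hA
  have hApos : ∀ r τ, 0 < A r τ := by
    intro r τ
    have h1 : (1:ℝ) ≤ Real.exp (c * S r) := by
      rw [← Real.exp_zero]
      exact Real.exp_le_exp.mpr (mul_nonneg hc.le (hS r))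
    have h2 := mul_nonneg (Real.exp_nonneg (-c * τ)) (sub_nonneg.mpr h1)
    simp only [hA]
    linarith
  have hAne : ∀ r τ, A r τ ≠ 0 := fun r τ => (hApos r τ).ne'
  have hzA : ∀ r τ, z r τ = g r - (1/c) * (Real.log (A r τ) - Real.log (A (r-1) τ)) := by
    intro r τ
    show g r - (1/c) * Real.log (A r τ / A (r-1) τ) = _
    rw [Real.log_div (hAne r τ) (hAne (r-1) τ)]
  have hA0 : ∀ τ, A 0 τ = 1 := by
    intro τ
    simp [hA, S]
  have hSr : ∀ n : ℕ, S (n+1) = S n + g (n+1) := by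
    intro n
    simp [S, Finset.sum_Icc_succ_top (Nat.le_add_left 1 n)]
  have hsum : ∀ τ n, ∑ k ∈ Finset.Icc 1 n, (g k - z k τ) = (1/c) * Real.log (A n τ) := by
    intro τ n
    induction n with
    | zero => simp [hA0]
    | succ n ih =>
      rw [Finset.sum_Icc_succ_top (Nat.le_add_left 1 n), ih, hzA]
      simp only [Nat.add_sub_cancel]
      ring
  intro r hr hrm
  obtain ⟨n, rfl⟩ : ∃ n, r = n + 1 := ⟨r - 1, by omega⟩
  constructor
  · rw [hzA]
    have h1 : A (n+1) 0 = Real.exp (c * S (n+1)) := by simp [hA]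
    have h2 : A n 0 = Real.exp (c * S n) := by simp [hA]
    simp only [Nat.add_sub_cancel, h1, h2, Real.log_exp, hSr n]
    field_simp
    ring
  · intro τ
    have hder : ∀ j, HasDerivAt (fun t => A j t) (-c * (A j τ - 1)) τ := by
      intro j
      have h1 : HasDerivAt (fun t : ℝ => -c * t) (-c) τ := by
        simpa using (hasDerivAt_id τ).const_mul (-c)
      have h3 := ((h1.exp).mul_const (Real.exp (c * S j) - 1)).const_add 1
      refine h3.congr_deriv ?_
      simp only [hA]
      ring
    have hlog : ∀ j, HasDerivAt (fun t => Real.log (A j t))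
        (-c * (A j τ - 1) / A j τ) τ := fun j => (hder j).log (hAne j τ)
    have hzfun : z (n+1) = fun t => g (n+1) - (1/c) * (Real.log (A (n+1) t) - Real.log (A n t)) := by
      funext t
      rw [hzA]
      simp only [Nat.add_sub_cancel]
    have hmain := (((hlog (n+1)).sub (hlog n)).const_mul (1/c)).const_sub (g (n+1))
    simp only [Pi.sub_apply] at hmain
    rw [← hzfun] at hmain
    refine hmain.congr_deriv ?_
    -- value equality
    have hval1 : Real.exp (-c * (g (n+1) - z (n+1) τ)) = A n τ / A (n+1) τ := by
      rw [hzA]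
      simp only [Nat.add_sub_cancel]
      have : -c * (g (n+1) - (g (n+1) - 1 / c * (Real.log (A (n+1) τ) - Real.log (A n τ))))
          = Real.log (A n τ) - Real.log (A (n+1) τ) := by
        field_simp
        ring
      rw [this, Real.exp_sub, Real.exp_log (hApos n τ), Real.exp_log (hApos (n+1) τ)]
    have hval2 : Real.exp (-c * ∑ k ∈ Finset.Icc 1 ((n+1) - 1), (g k - z k τ)) = (A n τ)⁻¹ := by
      simp only [Nat.add_sub_cancel, hsum τ n]
      have : -c * (1/c * Real.log (A n τ)) = -Real.log (A n τ) := by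
        field_simp
      rw [this, Real.exp_neg, Real.exp_log (hApos n τ)]
    rw [hval1, hval2]
    have h1 := hAne n τ
    have h2 := hAne (n+1) τ
    field_simp
    ring
end

section
/- For all c > 0, the expression for the limiting fraction of bins matched by GREEDY satisfies 1 - log(2 - e^{-c})/c ≥ 1 - e^{(e^{-c} - 1)}; that is, GREEDY's limiting matched fraction dominates OBLIVIOUS's for every c > 0. -/
/-!
With `x = e^{-c}` and `s = 1 - x ∈ (0, 1)` we have `c = -log (1 - s)` and `2 - x = 1 + s`, so the
claim becomes `e^s log (1 + s) ≤ -log (1 - s)`. The difference `g s = -log (1 - s) - e^s log (1 + s)`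
satisfies `g 0 = g' 0 = 0`, and `g''` is nonnegative on `[0, 1)` by the elementary bounds
`e^s ≤ 1 / (1 - s)` and `log (1 + s) ≤ s`, so `g` is nonnegative on `[0, 1)`.
-/

open Real Set

lemma nonneg_of_hasDerivAt_nonneg_Ico {f f' : ℝ → ℝ} {a b : ℝ}
    (hf : ∀ x ∈ Ico a b, HasDerivAt f (f' x) x) (hfa : f a = 0)
    (hf' : ∀ x ∈ Ico a b, 0 ≤ f' x) {x : ℝ} (hx : x ∈ Ico a b) : 0 ≤ f x := by
  have hmono : MonotoneOn f (Ico a b) := by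
    refine monotoneOn_of_hasDerivWithinAt_nonneg (f' := f') (convex_Ico a b)
      (fun y hy => (hf y hy).continuousAt.continuousWithinAt) (fun y hy => ?_) (fun y hy => ?_)
    all_goals rw [interior_Ico] at hy
    · exact (hf y (Ioo_subset_Ico_self hy)).hasDerivWithinAt
    · exact hf' y (Ioo_subset_Ico_self hy)
  simpa [hfa] using hmono (left_mem_Ico.2 (hx.1.trans_lt hx.2)) hx hx.1

namespace LogGap

noncomputable def gap (s : ℝ) : ℝ := -log (1 - s) - exp s * log (1 + s)

noncomputable def gap' (s : ℝ) : ℝ := (1 - s)⁻¹ - exp s * (log (1 + s) + (1 + s)⁻¹)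

noncomputable def gap'' (s : ℝ) : ℝ :=
  ((1 - s) ^ 2)⁻¹ - exp s * (log (1 + s) + (2 * s + 1) / (1 + s) ^ 2)

variable {s : ℝ}

lemma hasDerivAt_gap (h₁ : 1 - s ≠ 0) (h₂ : 1 + s ≠ 0) : HasDerivAt gap (gap' s) s := by
  have hsub := ((hasDerivAt_id s).const_sub 1).log h₁
  have hadd := ((hasDerivAt_id s).const_add 1).log h₂
  refine (hsub.neg.sub ((hasDerivAt_exp s).mul hadd)).congr_deriv ?_
  simp only [gap', id]
  field_simp

lemma hasDerivAt_gap' (h₁ : 1 - s ≠ 0) (h₂ : 1 + s ≠ 0) : HasDerivAt gap' (gap'' s) s := by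
  have hsub := ((hasDerivAt_id s).const_sub 1).inv h₁
  have hadd := (hasDerivAt_id s).const_add 1
  refine (hsub.sub ((hasDerivAt_exp s).mul ((hadd.log h₂).add (hadd.inv h₂)))).congr_deriv ?_
  simp only [gap'', id, Pi.add_apply, Pi.inv_apply]
  field_simp
  ring

lemma gap''_nonneg (h₀ : 0 ≤ s) (h₁ : s < 1) : 0 ≤ gap'' s := by
  have hsub : 0 < 1 - s := by linarith
  have hlog : 0 ≤ log (1 + s) := log_nonneg (by linarith)
  have hfrac : 0 ≤ (2 * s + 1) / (1 + s) ^ 2 := by positivity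
  have hpoly : (1 - s) * (s + (2 * s + 1) / (1 + s) ^ 2) ≤ 1 := by
    rw [← sub_nonneg]
    have hfactor : 1 - (1 - s) * (s + (2 * s + 1) / (1 + s) ^ 2) = s ^ 2 * (2 + s + s ^ 2) / (1 + s) ^ 2 := by
      field_simp
      ring
    rw [hfactor]
    positivity
  rw [gap'', sub_nonneg, inv_eq_one_div]
  calc exp s * (log (1 + s) + (2 * s + 1) / (1 + s) ^ 2)
      ≤ 1 / (1 - s) * (s + (2 * s + 1) / (1 + s) ^ 2) := by
        gcongr
        · exact exp_bound_div_one_sub_of_interval h₀ h₁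
        · linarith [log_le_sub_one_of_pos (by linarith : (0 : ℝ) < 1 + s)]
    _ ≤ 1 / (1 - s) ^ 2 := by
        rw [div_mul_eq_mul_div, one_mul, div_le_div_iff₀ hsub (by positivity)]
        nlinarith

lemma gap_nonneg (h₀ : 0 ≤ s) (h₁ : s < 1) : 0 ≤ gap s := by
  have hne : ∀ x ∈ Ico (0 : ℝ) 1, 1 - x ≠ 0 ∧ 1 + x ≠ 0 := fun x hx =>
    ⟨by linarith [hx.2], by linarith [hx.1]⟩
  have hgap' : ∀ x ∈ Ico (0 : ℝ) 1, 0 ≤ gap' x := fun x hx =>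
    nonneg_of_hasDerivAt_nonneg_Ico (fun y hy => hasDerivAt_gap' (hne y hy).1 (hne y hy).2)
      (by simp [gap']) (fun y hy => gap''_nonneg hy.1 hy.2) hx
  exact nonneg_of_hasDerivAt_nonneg_Ico (fun y hy => hasDerivAt_gap (hne y hy).1 (hne y hy).2)
    (by simp [gap]) hgap' ⟨h₀, h₁⟩

lemma exp_mul_log_one_add_le_neg_log_one_sub (h₀ : 0 ≤ s) (h₁ : s < 1) :
    exp s * log (1 + s) ≤ -log (1 - s) :=
  sub_nonneg.1 (gap_nonneg h₀ h₁)

end LogGap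

theorem stmt_18 (c : ℝ) (hc : 0 < c) :
    1 - Real.log (2 - Real.exp (-c)) / c ≥ 1 - Real.exp (Real.exp (-c) - 1) := by
  have hx₀ : 0 < exp (-c) := exp_pos _
  have hx₁ : exp (-c) < 1 := exp_lt_one_iff.2 (by linarith)
  have hineq := LogGap.exp_mul_log_one_add_le_neg_log_one_sub (s := 1 - exp (-c))
    (by linarith) (by linarith)
  rw [sub_sub_cancel, log_exp, neg_neg, show 1 + (1 - exp (-c)) = 2 - exp (-c) by ring,
    show 1 - exp (-c) = -(exp (-c) - 1) by ring, exp_neg, ← div_eq_inv_mul,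
    div_le_iff₀ (exp_pos _)] at hineq
  rw [ge_iff_le, sub_le_sub_iff_left, div_le_iff₀ hc]
  linarith
end
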